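/- Let g be a convex distortion function and suppose there exist constants L, β > 0 such that 1 − g(t) ≤ L·(1 − t)^β for all t ∈ [0,1]. Let λ > 0 with λβ > 1. Then: (c) R_g(𝔪) is finite for every 𝔪 ∈ M₁^λ, and R_g(𝔪 ∘ T_{a,b}⁻¹) = a·R_g(𝔪) + b for every 𝔪 ∈ M₁^λ, a ≥ 0 and b ∈ ℝ, where T_{a,b}(x) := a·x + b; and (d) there exists a constant C > 0 such that |R_g(𝔪) − R_g(N(0,1))| ≤ C·d_λ(𝔪, N(0,1))^β for all 𝔪 ∈ M₁^λ, where N(0,1) is the standard normal distribution on ℝ. -/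

import Mathlib

open MeasureTheory ProbabilityTheory Filter
open scoped ENNReal NNReal Topology

noncomputable section

/-- Distribution function of a Borel measure on ℝ. -/
def distFun (μ : Measure ℝ) (x : ℝ) : ℝ := (μ (Set.Iic x)).toReal

/-- Nonuniform Kolmogorov distance with weight `x ↦ 1 + |x|^λ`. -/
def kolDist (lam : ℝ) (μ ν : Measure ℝ) : ℝ≥0∞ :=
  ⨆ x : ℝ, ENNReal.ofReal (|distFun μ x - distFun ν x| * (1 + |x| ^ lam))

/-- The set `M₁^λ` of probability measures on ℝ with finite nonuniform
Kolmogorov distance to `δ₀`. -/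
def Mlam (lam : ℝ) : Set (Measure ℝ) :=
  {μ | IsProbabilityMeasure μ ∧ kolDist lam μ (Measure.dirac 0) < ⊤}

/-- The standard normal distribution. -/
def stdNormal : Measure ℝ := gaussianReal 0 1

/-- The normal distribution with mean `a` and variance `v` (Dirac at `a` for `v ≤ 0`). -/
def normalD (a v : ℝ) : Measure ℝ := gaussianReal a v.toNNReal

/-- `n`-fold convolution `μ^{*n}` (with `μ^{*0} := δ₀`). -/
def convPow (μ : Measure ℝ) : ℕ → Measure ℝ
  | 0 => Measure.dirac 0
  | n + 1 => Measure.map (fun p : ℝ × ℝ => p.1 + p.2) ((convPow μ n).prod μ)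

/-- Empirical mean `m̂_u` of the first `u` observations. -/
def sampleMean {Ω : Type*} (Y : ℕ → Ω → ℝ) (u : ℕ) (ω : Ω) : ℝ :=
  (∑ i ∈ Finset.range u, Y i ω) / u

/-- Empirical standard deviation `ŝ_u` of the first `u` observations. -/
def sampleSD {Ω : Type*} (Y : ℕ → Ω → ℝ) (u : ℕ) (ω : Ω) : ℝ :=
  Real.sqrt ((∑ i ∈ Finset.range u, (Y i ω - sampleMean Y u ω) ^ 2) / u)

/-- Empirical measure `μ̂_u` of the first `u` observations. -/
def empMeas {Ω : Type*} (Y : ℕ → Ω → ℝ) (u : ℕ) (ω : Ω) : Measure ℝ :=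
  (u : ℝ≥0∞)⁻¹ • ∑ i ∈ Finset.range u, Measure.dirac (Y i ω)

/-- Distortion risk functional `R_g(𝔪) = -∫_{-∞}^0 g(F(x))dx + ∫_0^∞ (1-g(F(x)))dx`. -/
def distRisk (g : ℝ → ℝ) (𝔪 : Measure ℝ) : ℝ :=
  -(∫ x in Set.Iio (0 : ℝ), g (distFun 𝔪 x)) + ∫ x in Set.Ioi (0 : ℝ), (1 - g (distFun 𝔪 x))

/-!
Convexity makes the increments of `g` largest at the right end of `[0, 1]`, so the bound
`1 - g t ≤ L (1 - t)^β` upgrades to the Hölder bound `|g t - g s| ≤ L |t - s|^β`. A finite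
nonuniform Kolmogorov distance `d` gives `|F_μ - F_ν| ≤ 2^λ d (1 + |x|)^(-λ)`, hence
`|g ∘ F_μ - g ∘ F_ν| ≤ L (2^λ d)^β (1 + |x|)^(-λβ)`, which is integrable since `λβ > 1`.
Comparing with `δ₀` shows that `R_g` is finite; comparing with `N(0, 1)` (which lies in
`M₁^λ` by Markov's inequality) gives the stability bound. For equivariance, the risk may be
computed by splitting the integral at any point `c` instead of `0` (and adding `c`); the
substitution `x = a u + b` carries the split at `-b / a` to the split at `0`.
-/

open Set Real

section DistributionFunction

variable (μ : Measure ℝ)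

lemma distFun_nonneg (x : ℝ) : 0 ≤ distFun μ x := ENNReal.toReal_nonneg

lemma distFun_le_one [IsProbabilityMeasure μ] (x : ℝ) : distFun μ x ≤ 1 :=
  ENNReal.toReal_le_of_le_ofReal zero_le_one (by simpa using prob_le_one)

lemma distFun_mem_Icc [IsProbabilityMeasure μ] (x : ℝ) : distFun μ x ∈ Icc (0 : ℝ) 1 :=
  ⟨distFun_nonneg μ x, distFun_le_one μ x⟩

lemma monotone_distFun [IsFiniteMeasure μ] : Monotone (distFun μ) := fun _ _ h =>
  ENNReal.toReal_mono (measure_ne_top _ _) (measure_mono (Iic_subset_Iic.mpr h))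

lemma one_sub_distFun [IsProbabilityMeasure μ] (x : ℝ) : 1 - distFun μ x = μ.real (Ioi x) := by
  rw [distFun, ← measureReal_def, ← compl_Iic, probReal_compl_eq_one_sub measurableSet_Iic]

lemma distFun_dirac (b x : ℝ) : distFun (Measure.dirac b) x = if b ≤ x then 1 else 0 := by
  by_cases h : b ≤ x <;> simp [distFun, Measure.dirac_apply' _ measurableSet_Iic, h]

lemma distFun_map_affine {a : ℝ} (ha : 0 < a) (b x : ℝ) :
    distFun (μ.map (fun y => a * y + b)) x = distFun μ ((x - b) / a) := by
  have hT : Measurable (fun y => a * y + b) := by fun_prop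
  have hpre : (fun y => a * y + b) ⁻¹' Iic x = Iic ((x - b) / a) := by
    ext y
    simp only [mem_preimage, mem_Iic, le_div_iff₀ ha]
    constructor <;> intro h <;> linarith
  rw [distFun, distFun, Measure.map_apply hT measurableSet_Iic, hpre]

end DistributionFunction

lemma one_add_rpow_le {lam u : ℝ} (hu : 0 ≤ u) (hlam : 0 ≤ lam) :
    (1 + u) ^ lam ≤ 2 ^ lam * (1 + u ^ lam) := by
  rcases le_total u 1 with hu1 | hu1
  · calc (1 + u) ^ lam ≤ 2 ^ lam := rpow_le_rpow (by positivity) (by linarith) hlam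
      _ ≤ 2 ^ lam * (1 + u ^ lam) :=
        le_mul_of_one_le_right (by positivity) (by linarith [rpow_nonneg hu lam])
  · calc (1 + u) ^ lam ≤ (2 * u) ^ lam := rpow_le_rpow (by positivity) (by linarith) hlam
      _ = 2 ^ lam * u ^ lam := mul_rpow zero_le_two hu
      _ ≤ 2 ^ lam * (1 + u ^ lam) := by gcongr; linarith

section KolmogorovDistance

variable {lam : ℝ} {μ ν ρ : Measure ℝ}

lemma abs_distFun_sub_mul_le_kolDist (h : kolDist lam μ ν ≠ ⊤) (x : ℝ) :
    |distFun μ x - distFun ν x| * (1 + |x| ^ lam) ≤ (kolDist lam μ ν).toReal :=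
  ENNReal.ofReal_le_iff_le_toReal h |>.mp <|
    le_iSup (fun x => ENNReal.ofReal (|distFun μ x - distFun ν x| * (1 + |x| ^ lam))) x

lemma kolDist_le_ofReal {D : ℝ} (h : ∀ x, |distFun μ x - distFun ν x| * (1 + |x| ^ lam) ≤ D) :
    kolDist lam μ ν ≤ ENNReal.ofReal D :=
  iSup_le fun x => ENNReal.ofReal_le_ofReal (h x)

lemma kolDist_comm : kolDist lam μ ν = kolDist lam ν μ := by
  simp only [kolDist, abs_sub_comm]

lemma kolDist_triangle : kolDist lam μ ν ≤ kolDist lam μ ρ + kolDist lam ρ ν := by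
  refine iSup_le fun x => ?_
  have hw : 0 ≤ 1 + |x| ^ lam := by positivity
  calc ENNReal.ofReal (|distFun μ x - distFun ν x| * (1 + |x| ^ lam))
      ≤ ENNReal.ofReal (|distFun μ x - distFun ρ x| * (1 + |x| ^ lam)
          + |distFun ρ x - distFun ν x| * (1 + |x| ^ lam)) := by
        rw [← add_mul]
        exact ENNReal.ofReal_le_ofReal
          (mul_le_mul_of_nonneg_right (abs_sub_le _ _ _) hw)
    _ ≤ _ := ENNReal.ofReal_add_le.trans <| add_le_add
        (le_iSup (fun x => ENNReal.ofReal (|distFun μ x - distFun ρ x| * (1 + |x| ^ lam))) x)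
        (le_iSup (fun x => ENNReal.ofReal (|distFun ρ x - distFun ν x| * (1 + |x| ^ lam))) x)

lemma kolDist_ne_top_of_mem_Mlam (hμ : μ ∈ Mlam lam) (hν : ν ∈ Mlam lam) :
    kolDist lam μ ν ≠ ⊤ := by
  refine ne_top_of_le_ne_top ?_ (kolDist_triangle (ρ := Measure.dirac 0))
  rw [kolDist_comm (μ := Measure.dirac 0)]
  exact ENNReal.add_ne_top.2 ⟨hμ.2.ne, hν.2.ne⟩

lemma abs_distFun_sub_le (hlam : 0 ≤ lam) (h : kolDist lam μ ν ≠ ⊤) (x : ℝ) :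
    |distFun μ x - distFun ν x| ≤ 2 ^ lam * (kolDist lam μ ν).toReal * (1 + |x|) ^ (-lam) := by
  rw [rpow_neg (by positivity), ← div_eq_mul_inv, le_div_iff₀ (by positivity)]
  calc |distFun μ x - distFun ν x| * (1 + |x|) ^ lam
      ≤ |distFun μ x - distFun ν x| * (2 ^ lam * (1 + |x| ^ lam)) :=
        mul_le_mul_of_nonneg_left (one_add_rpow_le (abs_nonneg x) hlam) (abs_nonneg _)
    _ = 2 ^ lam * (|distFun μ x - distFun ν x| * (1 + |x| ^ lam)) := by ring
    _ ≤ 2 ^ lam * (kolDist lam μ ν).toReal :=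
        mul_le_mul_of_nonneg_left (abs_distFun_sub_mul_le_kolDist h x) (by positivity)

end KolmogorovDistance

section Moments

variable {lam : ℝ} {μ : Measure ℝ} [IsProbabilityMeasure μ]

lemma abs_distFun_sub_dirac_zero_le (x : ℝ) :
    |distFun μ x - distFun (Measure.dirac 0) x| ≤ μ.real {y | |x| ≤ |y|} := by
  rw [distFun_dirac]
  split_ifs with hx
  · rw [abs_sub_comm, abs_of_nonneg (by linarith [distFun_le_one μ x]), one_sub_distFun]
    refine measureReal_mono fun y (hy : x < y) => ?_
    simp only [mem_ofPred_eq, abs_of_nonneg hx, le_abs]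
    exact Or.inl hy.le
  · rw [sub_zero, abs_of_nonneg (distFun_nonneg μ x), distFun, ← measureReal_def]
    refine measureReal_mono fun y (hy : y ≤ x) => ?_
    simp only [mem_ofPred_eq, abs_of_neg (not_le.1 hx), le_abs]
    exact Or.inr (by linarith)

lemma mem_Mlam_of_integrable_abs_rpow (hlam : 0 ≤ lam)
    (hμ : Integrable (fun y => |y| ^ lam) μ) : μ ∈ Mlam lam := by
  refine ⟨inferInstance, (kolDist_le_ofReal (D := 1 + ∫ y, |y| ^ lam ∂μ) fun x => ?_).trans_lt
    ENNReal.ofReal_lt_top⟩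
  have hmarkov : |x| ^ lam * μ.real {y | |x| ≤ |y|} ≤ ∫ y, |y| ^ lam ∂μ :=
    calc |x| ^ lam * μ.real {y | |x| ≤ |y|}
        ≤ |x| ^ lam * μ.real {y | |x| ^ lam ≤ |y| ^ lam} := by
          refine mul_le_mul_of_nonneg_left (measureReal_mono ?_) (by positivity)
          exact fun y (hy : |x| ≤ |y|) => rpow_le_rpow (abs_nonneg x) hy hlam
      _ ≤ ∫ y, |y| ^ lam ∂μ :=
          mul_meas_ge_le_integral_of_nonneg (ae_of_all _ fun y => by positivity) hμ _
  calc |distFun μ x - distFun (Measure.dirac 0) x| * (1 + |x| ^ lam)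
      ≤ μ.real {y | |x| ≤ |y|} * (1 + |x| ^ lam) := by
        gcongr
        exact abs_distFun_sub_dirac_zero_le x
    _ = μ.real {y | |x| ≤ |y|} + |x| ^ lam * μ.real {y | |x| ≤ |y|} := by ring
    _ ≤ 1 + ∫ y, |y| ^ lam ∂μ := add_le_add measureReal_le_one hmarkov

end Moments

instance : IsProbabilityMeasure stdNormal :=
  inferInstanceAs (IsProbabilityMeasure (gaussianReal 0 1))

lemma stdNormal_mem_Mlam {lam : ℝ} (hlam : 0 ≤ lam) : stdNormal ∈ Mlam lam := by
  refine mem_Mlam_of_integrable_abs_rpow hlam ?_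
  simpa [stdNormal, hlam] using
    (memLp_id_gaussianReal (μ := 0) (v := 1) lam.toNNReal).integrable_norm_rpow'

lemma ConvexOn.map_add_sub_le_map_add_sub {f : ℝ → ℝ} {D : Set ℝ} (hf : ConvexOn ℝ D f)
    {x y h : ℝ} (hx : x ∈ D) (hyh : y + h ∈ D) (hxy : x ≤ y) (hh : 0 ≤ h) :
    f (x + h) - f x ≤ f (y + h) - f y := by
  rcases hh.eq_or_lt with rfl | hh
  · simp
  -- both `x + h` and `y` lie in `[x, y + h]`, with mirror-image barycentric coordinates
  set θ := h / (y + h - x)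
  have hθh : θ * (y + h - x) = h := div_mul_cancel₀ _ (by linarith)
  have hθ0 : 0 ≤ θ := div_nonneg hh.le (by linarith)
  have hθ1 : θ ≤ 1 := div_le_one_of_le₀ (by linarith) (by linarith)
  have h₁ := hf.2 hx hyh (sub_nonneg.2 hθ1) hθ0 (by ring)
  have h₂ := hf.2 hx hyh hθ0 (sub_nonneg.2 hθ1) (by ring)
  simp only [smul_eq_mul] at h₁ h₂
  rw [show (1 - θ) * x + θ * (y + h) = x + h by linear_combination hθh] at h₁
  rw [show θ * x + (1 - θ) * (y + h) = y by linear_combination -hθh] at h₂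
  linarith

section Distortion

variable {g : ℝ → ℝ} {L β lam : ℝ}

lemma abs_sub_le_of_convexOn_of_one_sub_le (hg_mono : MonotoneOn g (Icc 0 1))
    (hg_conv : ConvexOn ℝ (Icc 0 1) g) (hg1 : g 1 = 1)
    (hdom : ∀ t ∈ Icc (0 : ℝ) 1, 1 - g t ≤ L * (1 - t) ^ β)
    {s t : ℝ} (hs : s ∈ Icc (0 : ℝ) 1) (ht : t ∈ Icc (0 : ℝ) 1) :
    |g t - g s| ≤ L * |t - s| ^ β := by
  wlog hst : s ≤ t generalizing s t
  · rw [abs_sub_comm, abs_sub_comm t]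
    exact this ht hs (le_of_not_ge hst)
  have hinc := hg_conv.map_add_sub_le_map_add_sub hs (by simp)
    (show s ≤ 1 - (t - s) by linarith [ht.2]) (sub_nonneg.2 hst)
  rw [add_sub_cancel, sub_add_cancel, hg1] at hinc
  rw [abs_of_nonneg (sub_nonneg.2 (hg_mono hs ht hst)), abs_of_nonneg (sub_nonneg.2 hst)]
  calc g t - g s ≤ 1 - g (1 - (t - s)) := hinc
    _ ≤ L * (1 - (1 - (t - s))) ^ β := hdom _ ⟨by linarith [hs.1, ht.2], by linarith⟩
    _ = L * (t - s) ^ β := by rw [sub_sub_cancel]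

lemma monotone_distortion_distFun (hg_mono : MonotoneOn g (Icc 0 1)) (μ : Measure ℝ)
    [IsProbabilityMeasure μ] : Monotone (fun x => g (distFun μ x)) := fun _ _ hxy =>
  hg_mono (distFun_mem_Icc μ _) (distFun_mem_Icc μ _) (monotone_distFun μ hxy)

variable {μ ν : Measure ℝ} [IsProbabilityMeasure μ] [IsProbabilityMeasure ν]

lemma abs_distortion_distFun_sub_le
    (hg : ∀ s ∈ Icc (0 : ℝ) 1, ∀ t ∈ Icc (0 : ℝ) 1, |g t - g s| ≤ L * |t - s| ^ β)
    (hL : 0 ≤ L) (hβ : 0 ≤ β) (hlam : 0 ≤ lam) (h : kolDist lam μ ν ≠ ⊤) (x : ℝ) :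
    |g (distFun μ x) - g (distFun ν x)|
      ≤ L * (2 ^ lam * (kolDist lam μ ν).toReal) ^ β * (1 + |x|) ^ (-(lam * β)) := by
  have hd : 0 ≤ 2 ^ lam * (kolDist lam μ ν).toReal := by positivity
  calc |g (distFun μ x) - g (distFun ν x)| ≤ L * |distFun μ x - distFun ν x| ^ β :=
        hg _ (distFun_mem_Icc ν x) _ (distFun_mem_Icc μ x)
    _ ≤ L * (2 ^ lam * (kolDist lam μ ν).toReal * (1 + |x|) ^ (-lam)) ^ β := by
        gcongr
        exact abs_distFun_sub_le hlam h x
    _ = L * (2 ^ lam * (kolDist lam μ ν).toReal) ^ β * (1 + |x|) ^ (-(lam * β)) := by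
        rw [mul_rpow hd (by positivity), ← rpow_mul (by positivity), neg_mul, mul_assoc]

end Distortion

section Stability

variable {g : ℝ → ℝ} {L β lam : ℝ} {μ ν : Measure ℝ}

lemma integrable_distortion_distFun_sub [IsProbabilityMeasure μ] [IsProbabilityMeasure ν]
    (hg_mono : MonotoneOn g (Icc 0 1))
    (hg : ∀ s ∈ Icc (0 : ℝ) 1, ∀ t ∈ Icc (0 : ℝ) 1, |g t - g s| ≤ L * |t - s| ^ β)
    (hL : 0 ≤ L) (hβ : 0 ≤ β) (hlam : 0 ≤ lam) (hlb : 1 < lam * β)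
    (h : kolDist lam μ ν ≠ ⊤) :
    Integrable (fun x => g (distFun μ x) - g (distFun ν x)) := by
  refine Integrable.mono' ((integrable_one_add_norm (E := ℝ) (μ := volume)
      (by simpa using hlb)).const_mul (L * (2 ^ lam * (kolDist lam μ ν).toReal) ^ β))
    ((monotone_distortion_distFun hg_mono μ).measurable.sub
      (monotone_distortion_distFun hg_mono ν).measurable).aestronglyMeasurable
    (ae_of_all _ fun x => ?_)
  simpa [mul_assoc] using abs_distortion_distFun_sub_le hg hL hβ hlam h x

lemma integral_abs_distortion_distFun_sub_le [IsProbabilityMeasure μ] [IsProbabilityMeasure ν]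
    (hg_mono : MonotoneOn g (Icc 0 1))
    (hg : ∀ s ∈ Icc (0 : ℝ) 1, ∀ t ∈ Icc (0 : ℝ) 1, |g t - g s| ≤ L * |t - s| ^ β)
    (hL : 0 ≤ L) (hβ : 0 ≤ β) (hlam : 0 ≤ lam) (hlb : 1 < lam * β)
    (h : kolDist lam μ ν ≠ ⊤) :
    ∫ x, |g (distFun μ x) - g (distFun ν x)|
      ≤ L * 2 ^ (lam * β) * (∫ x, (1 + |x|) ^ (-(lam * β))) * (kolDist lam μ ν).toReal ^ β := by
  have hint : Integrable fun x : ℝ => (1 + |x|) ^ (-(lam * β)) := by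
    simpa using integrable_one_add_norm (E := ℝ) (μ := volume) (by simpa using hlb)
  calc ∫ x, |g (distFun μ x) - g (distFun ν x)|
      ≤ ∫ x, L * (2 ^ lam * (kolDist lam μ ν).toReal) ^ β * (1 + |x|) ^ (-(lam * β)) :=
        integral_mono
          (integrable_distortion_distFun_sub hg_mono hg hL hβ hlam hlb h).abs
          (hint.const_mul _) (abs_distortion_distFun_sub_le hg hL hβ hlam h)
    _ = L * 2 ^ (lam * β) * (∫ x, (1 + |x|) ^ (-(lam * β))) * (kolDist lam μ ν).toReal ^ β := by
        rw [integral_const_mul, mul_rpow (by positivity) ENNReal.toReal_nonneg,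
          ← rpow_mul zero_le_two]
        ring

lemma integrableOn_distortion_distFun (hg_mono : MonotoneOn g (Icc 0 1))
    (hg : ∀ s ∈ Icc (0 : ℝ) 1, ∀ t ∈ Icc (0 : ℝ) 1, |g t - g s| ≤ L * |t - s| ^ β)
    (hg0 : g 0 = 0) (hg1 : g 1 = 1)
    (hL : 0 ≤ L) (hβ : 0 ≤ β) (hlam : 0 ≤ lam) (hlb : 1 < lam * β) (hμ : μ ∈ Mlam lam) :
    IntegrableOn (fun x => g (distFun μ x)) (Iio 0) ∧
      IntegrableOn (fun x => 1 - g (distFun μ x)) (Ioi 0) := by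
  have := hμ.1
  have hint := integrable_distortion_distFun_sub hg_mono hg hL hβ hlam hlb hμ.2.ne
  constructor
  · refine hint.integrableOn.congr_fun (fun x (hx : x < 0) => ?_) measurableSet_Iio
    simp [distFun_dirac, not_le.2 hx, hg0]
  · refine hint.neg.integrableOn.congr_fun (fun x (hx : 0 < x) => ?_) measurableSet_Ioi
    simp [distFun_dirac, hx.le, hg1]

lemma distRisk_sub_distRisk
    (hμ : IntegrableOn (fun x => g (distFun μ x)) (Iio 0) ∧
      IntegrableOn (fun x => 1 - g (distFun μ x)) (Ioi 0))
    (hν : IntegrableOn (fun x => g (distFun ν x)) (Iio 0) ∧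
      IntegrableOn (fun x => 1 - g (distFun ν x)) (Ioi 0)) :
    distRisk g μ - distRisk g ν = ∫ x, (g (distFun ν x) - g (distFun μ x)) := by
  have hleft : IntegrableOn (fun x => g (distFun ν x) - g (distFun μ x)) (Iic 0) :=
    integrableOn_Iic_iff_integrableOn_Iio (f := fun x => _) |>.mpr (hν.1.sub hμ.1)
  have hright : EqOn (fun x => (1 - g (distFun μ x)) - (1 - g (distFun ν x)))
      (fun x => g (distFun ν x) - g (distFun μ x)) (Ioi 0) := fun x _ => by ring
  rw [← intervalIntegral.integral_Iic_add_Ioi hleft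
    ((hμ.2.sub hν.2).congr_fun hright measurableSet_Ioi),
    integral_Iic_eq_integral_Iio, integral_sub hν.1 hμ.1,
    ← setIntegral_congr_fun measurableSet_Ioi hright, integral_sub hμ.2 hν.2, distRisk, distRisk]
  ring

lemma abs_distRisk_sub_le (hg_mono : MonotoneOn g (Icc 0 1))
    (hg : ∀ s ∈ Icc (0 : ℝ) 1, ∀ t ∈ Icc (0 : ℝ) 1, |g t - g s| ≤ L * |t - s| ^ β)
    (hg0 : g 0 = 0) (hg1 : g 1 = 1)
    (hL : 0 ≤ L) (hβ : 0 ≤ β) (hlam : 0 ≤ lam) (hlb : 1 < lam * β)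
    (hμ : μ ∈ Mlam lam) (hν : ν ∈ Mlam lam) :
    |distRisk g μ - distRisk g ν|
      ≤ L * 2 ^ (lam * β) * (∫ x, (1 + |x|) ^ (-(lam * β))) * (kolDist lam μ ν).toReal ^ β := by
  have := hμ.1
  have := hν.1
  rw [distRisk_sub_distRisk (integrableOn_distortion_distFun hg_mono hg hg0 hg1 hL hβ hlam hlb hμ)
    (integrableOn_distortion_distFun hg_mono hg hg0 hg1 hL hβ hlam hlb hν)]
  refine (abs_integral_le_integral_abs).trans ?_
  simp_rw [abs_sub_comm (g (distFun ν _))]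
  exact integral_abs_distortion_distFun_sub_le hg_mono hg hL hβ hlam hlb
    (kolDist_ne_top_of_mem_Mlam hμ hν)

end Stability

section Equivariance

def riskAt (h : ℝ → ℝ) (c : ℝ) : ℝ := -(∫ x in Iio c, h x) + (∫ x in Ioi c, (1 - h x)) + c

lemma distRisk_eq_riskAt (g : ℝ → ℝ) (μ : Measure ℝ) :
    distRisk g μ = riskAt (fun x => g (distFun μ x)) 0 := by
  simp [riskAt, distRisk]

lemma riskAt_eq_riskAt {h : ℝ → ℝ} (hloc : LocallyIntegrable h) {c : ℝ}
    (hl : IntegrableOn h (Iio c)) (hr : IntegrableOn (fun x => 1 - h x) (Ioi c)) (c' : ℝ) :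
    riskAt h c' = riskAt h c := by
  have hloc' : LocallyIntegrable (fun x => 1 - h x) := (locallyIntegrable_const 1).sub hloc
  have hl' : IntegrableOn h (Iio c') :=
    (hl.union ((hloc.integrableOn_isCompact isCompact_Icc).mono_set Ico_subset_Icc_self)).mono_set
      Iio_subset_Iio_union_Ico
  have hr' : IntegrableOn (fun x => 1 - h x) (Ioi c') :=
    (((hloc'.integrableOn_isCompact isCompact_Icc).mono_set Ioc_subset_Icc_self).union hr).mono_set
      Ioi_subset_Ioc_union_Ioi
  have hleft := intervalIntegral.integral_Iio_sub_Iio' hl' hl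
  have hright := intervalIntegral.integral_Ioi_sub_Ioi' hr hr'
  rw [intervalIntegral.integral_sub intervalIntegrable_const
    (hloc.integrableOn_isCompact isCompact_uIcc).intervalIntegrable,
    intervalIntegral.integral_const, smul_eq_mul, mul_one] at hright
  simp only [riskAt]
  linarith

lemma distRisk_dirac {g : ℝ → ℝ} (hg_mono : MonotoneOn g (Icc 0 1)) (hg0 : g 0 = 0)
    (hg1 : g 1 = 1) (b : ℝ) : distRisk g (Measure.dirac b) = b := by
  have hl : EqOn (fun x => g (distFun (Measure.dirac b) x)) 0 (Iio b) := fun x (hx : x < b) => by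
    simp [distFun_dirac, not_le.2 hx, hg0]
  have hr : EqOn (fun x => 1 - g (distFun (Measure.dirac b) x)) 0 (Ioi b) :=
    fun x (hx : b < x) => by simp [distFun_dirac, hx.le, hg1]
  rw [distRisk_eq_riskAt, riskAt_eq_riskAt (monotone_distortion_distFun hg_mono _).locallyIntegrable
    (integrableOn_zero.congr_fun hl.symm measurableSet_Iio)
    (integrableOn_zero.congr_fun hr.symm measurableSet_Ioi), riskAt,
    setIntegral_congr_fun measurableSet_Iio hl, setIntegral_congr_fun measurableSet_Ioi hr]
  simp

lemma image_affine_Iio {a : ℝ} (ha : 0 < a) (b c : ℝ) :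
    (fun u => a * u + b) '' Iio c = Iio (a * c + b) := by
  ext x
  constructor
  · rintro ⟨u, hu, rfl⟩
    exact add_lt_add_left (mul_lt_mul_of_pos_left hu ha) b
  · intro (hx : x < a * c + b)
    refine ⟨(x - b) / a, ?_, by field_simp; ring⟩
    rw [mem_Iio, div_lt_iff₀ ha]
    linarith

lemma image_affine_Ioi {a : ℝ} (ha : 0 < a) (b c : ℝ) :
    (fun u => a * u + b) '' Ioi c = Ioi (a * c + b) := by
  ext x
  constructor
  · rintro ⟨u, hu, rfl⟩
    exact add_lt_add_left (mul_lt_mul_of_pos_left hu ha) b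
  · intro (hx : a * c + b < x)
    refine ⟨(x - b) / a, ?_, by field_simp; ring⟩
    rw [mem_Ioi, lt_div_iff₀ ha]
    linarith

lemma setIntegral_image_affine {a : ℝ} (ha : 0 < a) (b : ℝ) (f : ℝ → ℝ) {s : Set ℝ}
    (hs : MeasurableSet s) :
    ∫ x in (fun u => a * u + b) '' s, f x = a * ∫ u in s, f (a * u + b) := by
  rw [integral_image_eq_integral_abs_deriv_smul hs
    (fun u _ => by simpa using (((hasDerivAt_id u).const_mul a).add_const b).hasDerivWithinAt)
    (fun u _ v _ huv => by simpa [ha.ne'] using huv), abs_of_pos ha, integral_smul, smul_eq_mul]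

lemma distRisk_map_affine {g : ℝ → ℝ} (hg_mono : MonotoneOn g (Icc 0 1)) (hg0 : g 0 = 0)
    (hg1 : g 1 = 1) {μ : Measure ℝ} [IsProbabilityMeasure μ]
    (hμ : IntegrableOn (fun x => g (distFun μ x)) (Iio 0) ∧
      IntegrableOn (fun x => 1 - g (distFun μ x)) (Ioi 0)) {a : ℝ} (ha : 0 ≤ a) (b : ℝ) :
    distRisk g (μ.map (fun x => a * x + b)) = a * distRisk g μ + b := by
  rcases ha.eq_or_lt with rfl | ha
  · simp [Measure.map_const, distRisk_dirac hg_mono hg0 hg1]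
  obtain ⟨c, hc⟩ : ∃ c, a * c + b = 0 := ⟨-b / a, by field_simp; ring⟩
  have hF : ∀ u, distFun (μ.map (fun x => a * x + b)) (a * u + b) = distFun μ u := fun u => by
    rw [distFun_map_affine μ ha, add_sub_cancel_right, mul_div_cancel_left₀ _ ha.ne']
  rw [distRisk_eq_riskAt, distRisk_eq_riskAt, ← riskAt_eq_riskAt
    (monotone_distortion_distFun hg_mono μ).locallyIntegrable hμ.1 hμ.2 c, riskAt, riskAt,
    -- the split point `0 = a * c + b` is the image of `c`
    ← hc, ← image_affine_Iio ha, ← image_affine_Ioi ha,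
    setIntegral_image_affine ha _ _ measurableSet_Iio,
    setIntegral_image_affine ha _ _ measurableSet_Ioi]
  simp only [hF]
  ring

end Equivariance

lemma integral_one_add_abs_rpow_neg_pos {r : ℝ} (hr : 1 < r) :
    0 < ∫ x : ℝ, (1 + |x|) ^ (-r) := by
  have hsupp : Function.support (fun x : ℝ => (1 + |x|) ^ (-r)) = univ :=
    eq_univ_of_forall fun x => (rpow_pos_of_pos (by positivity) _).ne'
  rw [integral_pos_iff_support_of_nonneg (fun x => by positivity)
    (by simpa using integrable_one_add_norm (E := ℝ) (μ := volume) (by simpa using hr)), hsupp]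
  simp

/-- Lemma 3.1: a convex distortion function with `1 - g(t) ≤ L(1-t)^β` yields a distortion
risk functional satisfying conditions (c) and (d) for every `λ > 0` with `λβ > 1`. -/
theorem distortion_risk_conditions
    (g : ℝ → ℝ) (hg_mono : MonotoneOn g (Set.Icc 0 1))
    (hg_conv : ConvexOn ℝ (Set.Icc 0 1) g)
    (hg0 : g 0 = 0) (hg1 : g 1 = 1)
    (L β : ℝ) (hL : 0 < L) (hβ : 0 < β)
    (hdom : ∀ t ∈ Set.Icc (0 : ℝ) 1, 1 - g t ≤ L * (1 - t) ^ β)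
    (lam : ℝ) (hlam : 0 < lam) (hlb : 1 < lam * β) :
    (∀ 𝔪 ∈ Mlam lam,
      IntegrableOn (fun x => g (distFun 𝔪 x)) (Set.Iio 0) volume ∧
      IntegrableOn (fun x => 1 - g (distFun 𝔪 x)) (Set.Ioi 0) volume) ∧
    (∀ 𝔪 ∈ Mlam lam, ∀ a b : ℝ, 0 ≤ a →
      distRisk g (Measure.map (fun x => a * x + b) 𝔪) = a * distRisk g 𝔪 + b) ∧
    (∃ C : ℝ, 0 < C ∧ ∀ 𝔪 ∈ Mlam lam,
      |distRisk g 𝔪 - distRisk g stdNormal| ≤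
        C * (kolDist lam 𝔪 stdNormal).toReal ^ β) := by
  have hg : ∀ s ∈ Icc (0 : ℝ) 1, ∀ t ∈ Icc (0 : ℝ) 1, |g t - g s| ≤ L * |t - s| ^ β :=
    fun _ hs _ ht => abs_sub_le_of_convexOn_of_one_sub_le hg_mono hg_conv hg1 hdom hs ht
  have hint (𝔪 : Measure ℝ) (h𝔪 : 𝔪 ∈ Mlam lam) :=
    integrableOn_distortion_distFun hg_mono hg hg0 hg1 hL.le hβ.le hlam.le hlb h𝔪
  refine ⟨hint, fun 𝔪 h𝔪 a b ha => ?_,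
    L * 2 ^ (lam * β) * ∫ x, (1 + |x|) ^ (-(lam * β)), ?_, fun 𝔪 h𝔪 => ?_⟩
  · have := h𝔪.1
    exact distRisk_map_affine hg_mono hg0 hg1 (hint 𝔪 h𝔪) ha b
  · have := integral_one_add_abs_rpow_neg_pos hlb
    positivity
  · exact abs_distRisk_sub_le hg_mono hg hg0 hg1 hL.le hβ.le hlam.le hlb h𝔪
      (stdNormal_mem_Mlam hlam.le)
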